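/- Let N, M, d be natural numbers and let H i j, for ordered pairs i ≠ j in {1,2,3}, be channel matrices for the 3-user M×N MIMO interference channel. Assume that for every r ≥ 1 the cyclic alignment matrix A_r starting at receiver 1 has rank min(rN, (r+1)M). If a feasible alignment strategy with dimensions (d, d, d) exists, then for every natural number r ≥ 0, (2r+1)·d ≤ max(rN, (r+1)M). -/

import Mathlib

open Matrix

/-- The `rN × (r+1)M` block matrix whose `j`-th block row carries `B j` in block
column `j`, `C j` in block column `j+1`, and zero blocks elsewhere. -/
def alignBlock {r N M : ℕ} (B C : Fin r → Matrix (Fin N) (Fin M) ℂ) :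
    Matrix (Fin r × Fin N) (Fin (r + 1) × Fin M) ℂ :=
  Matrix.of fun p q =>
    if (q.1 : ℕ) = (p.1 : ℕ) then B p.1 p.2 q.2
    else if (q.1 : ℕ) = (p.1 : ℕ) + 1 then C p.1 p.2 q.2
    else 0

open Fin.NatCast in
/-- The cyclic alignment matrix `A_q` starting at receiver `i` (users labelled
`0,1,2` for the paper's `1,2,3`): block row `j` (0-based) carries the channel
from transmitter `i+j+1` to receiver `i+j` and the channel from transmitter
`i+j+2` to receiver `i+j`, indices mod 3. -/
def cyclicAlign {N M : ℕ} (H : Fin 3 → Fin 3 → Matrix (Fin N) (Fin M) ℂ)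
    (i : Fin 3) (q : ℕ) : Matrix (Fin q × Fin N) (Fin (q + 1) × Fin M) ℂ :=
  alignBlock
    (fun j => H (i + ((j : ℕ) : Fin 3)) (i + ((j : ℕ) : Fin 3) + 1))
    (fun j => H (i + ((j : ℕ) : Fin 3)) (i + ((j : ℕ) : Fin 3) + 2))

/-- A feasible vector-space interference-alignment strategy with dimensions
`d i` for the 3-user channel with matrices `H i j` (channel from transmitter
`j` to receiver `i`). -/
def Feasible {N M : ℕ} (H : Fin 3 → Fin 3 → Matrix (Fin N) (Fin M) ℂ)
    (d : Fin 3 → ℕ) : Prop :=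
  ∃ (U : Fin 3 → Submodule ℂ (Fin M → ℂ)) (V : Fin 3 → Submodule ℂ (Fin N → ℂ)),
    (∀ i, Module.finrank ℂ (U i) = d i) ∧
    (∀ i, Module.finrank ℂ (V i) = d i) ∧
    (∀ i j, i ≠ j → ∀ u ∈ U j, ∀ v ∈ V i, star v ⬝ᵥ (H i j).mulVec u = 0)

/-!
Place `U ⟨k+1⟩` in block column `k` of `A_r`. Feasibility says that block row `j` maps the
resulting `(r+1)d`-dimensional space into the annihilator of `V ⟨j⟩`, so `A_r` maps it into a
space of dimension `r(N-d)`. Hence `(r+1)d ≤ r(N-d) + dim ker A_r = r(N-d) + (r+1)M - rank A_r`,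
which for `rank A_r = min(rN, (r+1)M)` is `(2r+1)d ≤ max(rN, (r+1)M)`.
-/

open Module Submodule

section DotPerp

variable {𝕜 n : Type*} [RCLike 𝕜] [Fintype n]

noncomputable def dotPerp (V : Submodule 𝕜 (n → 𝕜)) : Submodule 𝕜 (n → 𝕜) :=
  (V.map ((WithLp.linearEquiv 2 𝕜 (n → 𝕜)).symm : (n → 𝕜) →ₗ[𝕜] _))ᗮ.map
    (WithLp.linearEquiv 2 𝕜 (n → 𝕜) : EuclideanSpace 𝕜 n →ₗ[𝕜] _)

theorem mem_dotPerp {V : Submodule 𝕜 (n → 𝕜)} {w : n → 𝕜} :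
    w ∈ dotPerp V ↔ ∀ v ∈ V, star v ⬝ᵥ w = 0 := by
  rw [dotPerp, mem_map_equiv, mem_orthogonal]
  constructor
  · intro h v hv
    simpa [EuclideanSpace.inner_eq_star_dotProduct, dotProduct_comm] using h _ (mem_map_of_mem hv)
  · rintro h _ ⟨v, hv, rfl⟩
    simpa [EuclideanSpace.inner_eq_star_dotProduct, dotProduct_comm] using h v hv

theorem finrank_add_finrank_dotPerp (V : Submodule 𝕜 (n → 𝕜)) :
    finrank 𝕜 V + finrank 𝕜 (dotPerp V) = Fintype.card n := by
  rw [dotPerp, LinearEquiv.finrank_map_eq,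
    ← LinearEquiv.finrank_map_eq (WithLp.linearEquiv 2 𝕜 (n → 𝕜)).symm V,
    finrank_add_finrank_orthogonal, finrank_euclideanSpace]

end DotPerp

def Submodule.piUnivEquiv {R ι : Type*} [Semiring R] {φ : ι → Type*} [∀ i, AddCommMonoid (φ i)]
    [∀ i, Module R (φ i)] (p : ∀ i, Submodule R (φ i)) : pi Set.univ p ≃ₗ[R] ∀ i, p i where
  toFun x i := ⟨x.1 i, x.2 i trivial⟩
  invFun v := ⟨fun i => v i, fun i _ => (v i).2⟩
  map_add' _ _ := rfl
  map_smul' _ _ := rfl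

section BlockPi

variable {K ι κ : Type*} [Field K]

def blockPi (p : ι → Submodule K (κ → K)) : Submodule K (ι × κ → K) :=
  (pi Set.univ p).map ((LinearEquiv.curry K K ι κ).symm : (ι → κ → K) →ₗ[K] _)

theorem mem_blockPi {p : ι → Submodule K (κ → K)} {x : ι × κ → K} :
    x ∈ blockPi p ↔ ∀ i, (fun k => x (i, k)) ∈ p i := by
  simp only [blockPi, mem_map_equiv, LinearEquiv.symm_symm, LinearEquiv.coe_curry, mem_pi,
    Set.mem_univ, forall_const]
  rfl

theorem finrank_blockPi [Fintype ι] [Fintype κ] (p : ι → Submodule K (κ → K)) :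
    finrank K (blockPi p) = ∑ i, finrank K (p i) := by
  rw [blockPi, LinearEquiv.finrank_map_eq, (piUnivEquiv p).finrank_eq,
    Module.finrank_pi_fintype]

end BlockPi

theorem finrank_le_finrank_add_finrank_ker_of_map_le {K E F : Type*} [Field K]
    [AddCommGroup E] [Module K E] [FiniteDimensional K E] [AddCommGroup F] [Module K F]
    {f : E →ₗ[K] F} {W : Submodule K E} {Z : Submodule K F} [FiniteDimensional K Z]
    (h : W.map f ≤ Z) : finrank K W ≤ finrank K Z + finrank K (LinearMap.ker f) := by
  have hker : finrank K (LinearMap.ker (f.domRestrict W)) ≤ finrank K (LinearMap.ker f) := by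
    rw [LinearMap.ker_domRestrict, (equivMapOfInjective _ W.injective_subtype _).finrank_eq]
    exact finrank_mono (map_comap_le _ _)
  rw [← (f.domRestrict W).finrank_range_add_finrank_ker, LinearMap.range_domRestrict]
  exact add_le_add (finrank_mono h) hker

theorem alignBlock_mulVec_apply {r N M : ℕ} (B C : Fin r → Matrix (Fin N) (Fin M) ℂ)
    (x : Fin (r + 1) × Fin M → ℂ) (j : Fin r) (n : Fin N) :
    (alignBlock B C *ᵥ x) (j, n)
      = (B j *ᵥ fun m => x (j.castSucc, m)) n + (C j *ᵥ fun m => x (j.succ, m)) n := by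
  have hentry : ∀ k m, alignBlock B C (j, n) (k, m)
      = (if k = j.castSucc then B j n m else 0) + (if k = j.succ then C j n m else 0) := by
    intro k m
    simp only [alignBlock, Matrix.of_apply, Fin.ext_iff, Fin.val_castSucc, Fin.val_succ]
    split_ifs <;> simp_all
  simp only [mulVec, dotProduct, Fintype.sum_prod_type, hentry, add_mul, ite_mul, zero_mul,
    Finset.sum_add_distrib, Finset.sum_ite_irrel, Finset.sum_const_zero, Finset.sum_ite_eq',
    Finset.mem_univ, if_true]

theorem sum_finrank_add_rank_alignBlock_le {r N M : ℕ} (B C : Fin r → Matrix (Fin N) (Fin M) ℂ)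
    (P : Fin (r + 1) → Submodule ℂ (Fin M → ℂ)) (Q : Fin r → Submodule ℂ (Fin N → ℂ))
    (hB : ∀ j, ∀ u ∈ P j.castSucc, ∀ v ∈ Q j, star v ⬝ᵥ B j *ᵥ u = 0)
    (hC : ∀ j, ∀ u ∈ P j.succ, ∀ v ∈ Q j, star v ⬝ᵥ C j *ᵥ u = 0) :
    ∑ k, finrank ℂ (P k) + ∑ j, finrank ℂ (Q j) + (alignBlock B C).rank
      ≤ r * N + (r + 1) * M := by
  have hmap : (blockPi P).map (alignBlock B C).mulVecLin ≤ blockPi (dotPerp ∘ Q) := by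
    rintro _ ⟨x, hx, rfl⟩
    rw [SetLike.mem_coe, mem_blockPi] at hx
    rw [mem_blockPi]
    intro j
    rw [Function.comp_apply, mem_dotPerp]
    intro v hv
    have hrow : (fun n => (alignBlock B C *ᵥ x) (j, n))
        = B j *ᵥ (fun m => x (j.castSucc, m)) + C j *ᵥ (fun m => x (j.succ, m)) :=
      funext (alignBlock_mulVec_apply B C x j)
    rw [Matrix.mulVecLin_apply, hrow, dotProduct_add, hB j _ (hx _) v hv, hC j _ (hx _) v hv,
      add_zero]
  have hperp : ∑ j, finrank ℂ (Q j) + finrank ℂ (blockPi (dotPerp ∘ Q)) = r * N := by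
    simp [finrank_blockPi, ← Finset.sum_add_distrib, finrank_add_finrank_dotPerp]
  have hnullity := (alignBlock B C).mulVecLin.finrank_range_add_finrank_ker
  rw [finrank_fintype_fun_eq_card, Fintype.card_prod, Fintype.card_fin, Fintype.card_fin]
    at hnullity
  have hcount := finrank_le_finrank_add_finrank_ker_of_map_le hmap
  rw [finrank_blockPi] at hcount
  rw [Matrix.rank]
  omega

open Fin.NatCast in
theorem Feasible.add_rank_cyclicAlign_le {N M d : ℕ}
    {H : Fin 3 → Fin 3 → Matrix (Fin N) (Fin M) ℂ} (hfeas : Feasible H fun _ => d)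
    (i : Fin 3) (r : ℕ) :
    (2 * r + 1) * d + (cyclicAlign H i r).rank ≤ r * N + (r + 1) * M := by
  obtain ⟨U, V, hU, hV, horth⟩ := hfeas
  rw [cyclicAlign]
  convert sum_finrank_add_rank_alignBlock_le _ _
    (fun k => U (i + ((k : ℕ) : Fin 3) + 1)) (fun j => V (i + ((j : ℕ) : Fin 3))) ?_ ?_ using 2
  · simp only [hU, hV, Finset.sum_const, Finset.card_univ, Fintype.card_fin, smul_eq_mul]
    ring
  · exact fun j u hu v hv => horth _ _ (by simp) u hu v hv
  · intro j u hu v hv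
    refine horth _ _ (by simp) u ?_ v hv
    simpa [add_assoc, one_add_one_eq_two] using hu

/-- necessity direction of Theorem 4, symmetric 3-user channel.
If every cyclic alignment matrix `A_r` starting at receiver 1 has full rank and a
feasible strategy with dimensions `(d,d,d)` exists, then
`(2r+1)d ≤ max (rN) ((r+1)M)` for every `r ≥ 0`. -/
theorem three_user_symmetric_necessary
    (N M d : ℕ)
    (H : Fin 3 → Fin 3 → Matrix (Fin N) (Fin M) ℂ)
    (hrank : ∀ r : ℕ, 1 ≤ r →
      (cyclicAlign H 0 r).rank = min (r * N) ((r + 1) * M))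
    (hfeas : Feasible H (fun _ => d)) :
    ∀ r : ℕ, (2 * r + 1) * d ≤ max (r * N) ((r + 1) * M) := by
  intro r
  have hrank' : (cyclicAlign H 0 r).rank = min (r * N) ((r + 1) * M) := by
    rcases Nat.eq_zero_or_pos r with rfl | hr
    · simpa using (cyclicAlign H 0 0).rank_le_card_height
    · exact hrank r hr
  have hcount := hfeas.add_rank_cyclicAlign_le 0 r
  have hminmax := min_add_max (r * N) ((r + 1) * M)
  omega
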